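/- Let G be a connected undirected graph on n ≥ 2 nodes with symmetric adjacency matrix Φ (nonnegative entries, zero diagonal), Laplacian L = D − Φ, and let (j,k) be an edge of G (Φ_jk > 0). Set w = L†(e_j − e_k) ∈ R^n, where e_j, e_k are standard basis vectors. Then the maximum entry of w is attained at index j or at index k, and the minimum entry of w is attained at index j or at index k; that is, max_i w_i = max(w_j, w_k) and min_i w_i = min(w_j, w_k). -/

import Mathlib

open MeasureTheory ProbabilityTheory Filter Matrix
open scoped ENNReal NNReal BigOperators

noncomputable section

/-- Euclidean distance between two vectors in `ℝ^p`. -/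
def dist2 {p : ℕ} (a b : Fin p → ℝ) : ℝ := Real.sqrt (∑ l, (a l - b l) ^ 2)

/-- `E : Ω → ℝ^{n×p}` has independent, mean-zero rows whose sub-Gaussian norm
`‖E_i‖_{ψ₂} = sup_{‖v‖=1} inf {K > 0 : 𝔼 exp((vᵀE_i)²/K²) ≤ 2}` is at most `σ`. -/
def HasIndepSubGaussianRows {Ω : Type} [MeasurableSpace Ω] (μ : Measure Ω)
    {n p : ℕ} (E : Ω → Matrix (Fin n) (Fin p) ℝ) (σ : ℝ) : Prop :=
  iIndepFun (fun i ω => E ω i) μ ∧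
  (∀ i l, ∫ ω, E ω i l ∂μ = 0) ∧
  (∀ i, ∀ v : Fin p → ℝ, ∑ l, (v l) ^ 2 = 1 → ∀ K : ℝ, σ < K →
    ∫ ω, Real.exp ((∑ l, v l * E ω i l) ^ 2 / K ^ 2) ∂μ ≤ 2)

/-- Index type for the potential edges `{(j,k) : j < k}` of a graph on `Fin n`. -/
abbrev EdgeIdx (n : ℕ) := {e : Fin n × Fin n // e.1 < e.2}

/-- Oriented edge-incidence matrix of the affinity matrix `Φ`: the column indexed by a
pair `(j,k)` with `j < k` has entry `√Φ_jk` in row `j`, `-√Φ_jk` in row `k` and zeros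
elsewhere (pairs that are not edges contribute zero columns). -/
def incidence {n : ℕ} (Φ : Matrix (Fin n) (Fin n) ℝ) : Matrix (Fin n) (EdgeIdx n) ℝ :=
  Matrix.of fun i e =>
    if i = e.val.1 then Real.sqrt (Φ e.val.1 e.val.2)
    else if i = e.val.2 then -Real.sqrt (Φ e.val.1 e.val.2) else 0

/-- The four Penrose conditions: `B` is the Moore–Penrose pseudoinverse of `A`. -/
def IsPInv {m n : Type} [Fintype m] [Fintype n]
    (A : Matrix m n ℝ) (B : Matrix n m ℝ) : Prop :=
  A * B * A = A ∧ B * A * B = B ∧ (A * B)ᵀ = A * B ∧ (B * A)ᵀ = B * A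

/-- Maximal absolute entry `‖M‖_max` of a matrix. -/
def maxEntry {m n : Type} [Fintype m] [Fintype n] (M : Matrix m n ℝ) : ℝ :=
  ⨆ i, ⨆ j, |M i j|

/-- The graph whose edges are the pairs with strictly positive affinity. -/
def graphOf {n : ℕ} (Φ : Matrix (Fin n) (Fin n) ℝ) : SimpleGraph (Fin n) :=
  SimpleGraph.fromRel fun i j => 0 < Φ i j

/-- A valid affinity matrix: symmetric, nonnegative entries, zero diagonal, connected. -/
def IsValidAffinity {n : ℕ} (Φ : Matrix (Fin n) (Fin n) ℝ) : Prop :=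
  Φᵀ = Φ ∧ (∀ i j, 0 ≤ Φ i j) ∧ (∀ i, Φ i i = 0) ∧ (graphOf Φ).Connected

/-- The convex clustering penalty `Σ_{i<j} √Φ_ij ‖U_{i·} - U_{j·}‖₂`. -/
def penaltySum {n p : ℕ} (Φ : Matrix (Fin n) (Fin n) ℝ)
    (U : Matrix (Fin n) (Fin p) ℝ) : ℝ :=
  ∑ e : EdgeIdx n, Real.sqrt (Φ e.val.1 e.val.2) * dist2 (U e.val.1) (U e.val.2)

/-- The convex clustering objective
`U ↦ γ Σ_{i<j} √Φ_ij ‖U_{i·} - U_{j·}‖₂ + (1/2) ‖U - X‖_F²`. -/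
def ccObj {n p : ℕ} (γ : ℝ) (Φ : Matrix (Fin n) (Fin n) ℝ)
    (X U : Matrix (Fin n) (Fin p) ℝ) : ℝ :=
  γ * penaltySum Φ U + (1 / 2) * ∑ i, ∑ l, (U i l - X i l) ^ 2

/-- Diameter `max_{a,b ∈ C} ‖a - b‖₂` of a finite set of centers. -/
def diamC {p : ℕ} (C : Finset (Fin p → ℝ)) : ℝ :=
  ⨆ a : C, ⨆ b : C, dist2 a.val b.val

/-- Graph Laplacian `L = D - Φ`. -/
def lap {n : ℕ} (Φ : Matrix (Fin n) (Fin n) ℝ) : Matrix (Fin n) (Fin n) ℝ :=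
  Matrix.diagonal (fun i => ∑ j, Φ i j) - Φ

/-- Two-cluster membership (clusters `{0,…,n/2-1}` and `{n/2,…,n-1}`). -/
def sameCluster {n : ℕ} (i j : Fin n) : Prop := ((i : ℕ) < n / 2 ↔ (j : ℕ) < n / 2)

instance {n : ℕ} (i j : Fin n) : Decidable (sameCluster i j) := by
  unfold sameCluster; infer_instance

/-- `Φ` is the adjacency matrix of the two-cluster stochastic block model with
within-cluster probability `pw` and between-cluster probability `pb`. -/
def IsSBM {Ω : Type} [MeasurableSpace Ω] (μ : Measure Ω) {n : ℕ}
    (Φ : Ω → Matrix (Fin n) (Fin n) ℝ) (pw pb : ℝ) : Prop :=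
  (∀ ω, (Φ ω)ᵀ = Φ ω) ∧ (∀ ω i, Φ ω i i = 0) ∧
  (∀ ω i j, Φ ω i j = 0 ∨ Φ ω i j = 1) ∧
  iIndepFun (fun (e : EdgeIdx n) ω => Φ ω e.val.1 e.val.2) μ ∧
  (∀ e : EdgeIdx n, μ {ω | Φ ω e.val.1 e.val.2 = 1} =
      ENNReal.ofReal (if sameCluster e.val.1 e.val.2 then pw else pb))

/-- The matrix whose first `n/2` rows equal `c₁` and remaining rows equal `c₂`. -/
def twoClusterU (n : ℕ) {p : ℕ} (c₁ c₂ : Fin p → ℝ) : Matrix (Fin n) (Fin p) ℝ :=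
  Matrix.of fun i l => if (i : ℕ) < n / 2 then c₁ l else c₂ l

/-- `Σ_{(i,j) ∈ E} Φ_ij ‖U_{i·} - U_{j·}‖₂` (for a 0/1 matrix `Φ`, the sum of
`‖U_{i·} - U_{j·}‖₂` over the edges `i < j` with `Φ_ij = 1`). -/
def cutSum {n p : ℕ} (Φv : Matrix (Fin n) (Fin n) ℝ)
    (U : Matrix (Fin n) (Fin p) ℝ) : ℝ :=
  ∑ e : EdgeIdx n, Φv e.val.1 e.val.2 * dist2 (U e.val.1) (U e.val.2)

/-- Adjacency matrix of the advantageous two-clique graph `G(n,k)`: two cliques on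
`{0,…,n/2-1}` and `{n/2,…,n-1}` together with the `k` bridges `{i, i+n/2}`, `i < k`. -/
def advPhi (n k : ℕ) : Matrix (Fin n) (Fin n) ℝ :=
  Matrix.of fun i j =>
    if i ≠ j ∧ (((i : ℕ) < n / 2 ∧ (j : ℕ) < n / 2) ∨
        (n / 2 ≤ (i : ℕ) ∧ n / 2 ≤ (j : ℕ)) ∨
        ((j : ℕ) = (i : ℕ) + n / 2 ∧ (i : ℕ) < k) ∨
        ((i : ℕ) = (j : ℕ) + n / 2 ∧ (j : ℕ) < k))
    then 1 else 0

/-- The `n×n` matrix `(1/n) 1_n 1_nᵀ`. -/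
def onesProj (n : ℕ) : Matrix (Fin n) (Fin n) ℝ :=
  Matrix.of fun _ _ => (1 : ℝ) / n

/-- Expected adjacency matrix `B ⊗ J - p_w I_n` of the two-cluster stochastic block
model (clusters being the first and last `n/2` indices). -/
def sbmExpected (n : ℕ) (pw pb : ℝ) : Matrix (Fin n) (Fin n) ℝ :=
  Matrix.of fun i j =>
    (if ((i : ℕ) < n / 2 ↔ (j : ℕ) < n / 2) then pw else pb) -
      (if i = j then pw else 0)

end

/-!
Since `e_j - e_k` is orthogonal to the constants, which span the kernel of the Laplacian of a
connected graph, `w = L†(e_j - e_k)` solves `L w = e_j - e_k`. So `w` is subharmonic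
(`(L w)_i ≤ 0`) away from `j` and superharmonic away from `k`, and the discrete maximum
principle puts its maximum at `j` and its minimum at `k`.
-/

namespace IsPInv

theorem mul_mul_right_eq_of_isSymm {m : Type} [Fintype m] {A M : Matrix m m ℝ}
    (hA : A.IsSymm) (h : IsPInv A M) : A * (A * M) = A := by
  have hAMA : A * Mᵀ * A = A := by
    simpa [transpose_mul, hA.eq, Matrix.mul_assoc] using congrArg transpose h.1
  calc A * (A * M) = A * (A * M)ᵀ := by rw [h.2.2.1]
    _ = A * Mᵀ * A := by rw [transpose_mul, hA.eq, Matrix.mul_assoc]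
    _ = A := hAMA

end IsPInv

section Laplacian

variable {n : ℕ} {Φ : Matrix (Fin n) (Fin n) ℝ}

theorem isSymm_lap (hsym : Φ.IsSymm) : (lap Φ).IsSymm := by
  simp [Matrix.IsSymm, lap, Matrix.transpose_sub, hsym.eq]

theorem lap_mulVec_apply (v : Fin n → ℝ) (i : Fin n) :
    (lap Φ *ᵥ v) i = ∑ l, Φ i l * (v i - v l) := by
  simp only [lap, mulVec, dotProduct, Matrix.sub_apply, Matrix.diagonal_apply, sub_mul, ite_mul,
    zero_mul, Finset.sum_sub_distrib, Finset.sum_ite_eq, Finset.mem_univ, if_true, mul_sub,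
    Finset.sum_mul]

theorem sum_lap_mulVec (hsym : Φ.IsSymm) (v : Fin n → ℝ) : ∑ i, (lap Φ *ᵥ v) i = 0 := by
  simp only [lap_mulVec_apply, mul_sub, Finset.sum_sub_distrib, sub_eq_zero]
  rw [Finset.sum_comm (f := fun i l => Φ i l * v l)]
  exact Finset.sum_congr rfl fun i _ => Finset.sum_congr rfl fun l _ => by
    rw [← hsym.apply l i]

theorem pos_of_graphOf_adj (hsym : Φ.IsSymm) {i l : Fin n} (hadj : (graphOf Φ).Adj i l) :
    0 < Φ i l := by
  rcases hadj with ⟨-, h | h⟩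
  · exact h
  · rwa [hsym.apply l i]

/-- If `v` is maximal at `i` and subharmonic there, it is constant on the neighbours of `i`:
every term `Φ i l (v i - v l)` of `(L v)_i ≤ 0` is nonnegative, hence zero. -/
theorem apply_eq_of_adj_of_isMax (hsym : Φ.IsSymm) (hnn : ∀ i j, 0 ≤ Φ i j)
    {v : Fin n → ℝ} {i l : Fin n} (hmax : ∀ m, v m ≤ v i) (hi : (lap Φ *ᵥ v) i ≤ 0)
    (hadj : (graphOf Φ).Adj i l) : v l = v i := by
  have hterm : ∀ m ∈ Finset.univ, 0 ≤ Φ i m * (v i - v m) :=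
    fun m _ => mul_nonneg (hnn i m) (sub_nonneg.2 (hmax m))
  rw [lap_mulVec_apply] at hi
  have hzero := (Finset.sum_eq_zero_iff_of_nonneg hterm).1
    (le_antisymm hi (Finset.sum_nonneg hterm)) l (Finset.mem_univ l)
  rcases mul_eq_zero.1 hzero with h | h
  · exact absurd h (pos_of_graphOf_adj hsym hadj).ne'
  · linarith

theorem apply_le_of_lap_mulVec_nonpos (hsym : Φ.IsSymm) (hnn : ∀ i j, 0 ≤ Φ i j)
    (hconn : (graphOf Φ).Connected) {v : Fin n → ℝ} {j : Fin n}
    (h : ∀ i, i ≠ j → (lap Φ *ᵥ v) i ≤ 0) (i : Fin n) : v i ≤ v j := by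
  have : Nonempty (Fin n) := ⟨j⟩
  obtain ⟨i₀, hi₀⟩ := Finite.exists_max v
  suffices hj : v j = v i₀ from hj ▸ hi₀ i
  by_contra hj
  obtain ⟨d, -, hd₁, hd₂⟩ :=
    (hconn.preconnected i₀ j).some.exists_boundary_dart {m | v m = v i₀} rfl hj
  have hfst : ∀ m, v m ≤ v d.fst := fun m => (hd₁ : v d.fst = v i₀) ▸ hi₀ m
  have hne : d.fst ≠ j := fun h => hj (h ▸ hd₁)
  exact hd₂ ((apply_eq_of_adj_of_isMax hsym hnn hfst (h _ hne) d.adj).trans hd₁)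

theorem le_apply_of_lap_mulVec_nonneg (hsym : Φ.IsSymm) (hnn : ∀ i j, 0 ≤ Φ i j)
    (hconn : (graphOf Φ).Connected) {v : Fin n → ℝ} {k : Fin n}
    (h : ∀ i, i ≠ k → 0 ≤ (lap Φ *ᵥ v) i) (i : Fin n) : v k ≤ v i := by
  have := apply_le_of_lap_mulVec_nonpos hsym hnn hconn (v := -v)
    (fun i hi => by simpa [mulVec_neg] using h i hi) i
  simpa using this

theorem eq_zero_of_lap_mulVec_eq_zero (hsym : Φ.IsSymm) (hnn : ∀ i j, 0 ≤ Φ i j)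
    (hconn : (graphOf Φ).Connected) {r : Fin n → ℝ} (hr : lap Φ *ᵥ r = 0)
    (hsum : ∑ i, r i = 0) : r = 0 := by
  have hconst : ∀ a b, r a = r b := fun a b =>
    le_antisymm (apply_le_of_lap_mulVec_nonpos hsym hnn hconn (v := r) (by simp [hr]) a)
      (apply_le_of_lap_mulVec_nonpos hsym hnn hconn (v := r) (by simp [hr]) b)
  funext a
  have hn : (n : ℝ) ≠ 0 := Nat.cast_ne_zero.2 (Fin.pos a).ne'
  rw [Finset.sum_congr rfl fun i _ => hconst i a, Finset.sum_const, Finset.card_univ,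
    Fintype.card_fin, nsmul_eq_mul] at hsum
  simpa [hn] using hsum

/-- Since `L (L L†) = L`, the vector `u - L L† u` is constant, and it has zero sum. -/
theorem lap_mulVec_mulVec_of_isPInv (hsym : Φ.IsSymm) (hnn : ∀ i j, 0 ≤ Φ i j)
    (hconn : (graphOf Φ).Connected) {M : Matrix (Fin n) (Fin n) ℝ} (hM : IsPInv (lap Φ) M)
    {u : Fin n → ℝ} (hu : ∑ i, u i = 0) : lap Φ *ᵥ (M *ᵥ u) = u := by
  have hr : lap Φ *ᵥ (u - lap Φ *ᵥ (M *ᵥ u)) = 0 := by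
    rw [mulVec_sub, mulVec_mulVec, mulVec_mulVec, Matrix.mul_assoc,
      hM.mul_mul_right_eq_of_isSymm (isSymm_lap hsym), sub_self]
  have hsum : ∑ i, (u - lap Φ *ᵥ (M *ᵥ u)) i = 0 := by
    simp only [Pi.sub_apply, Finset.sum_sub_distrib, hu, sum_lap_mulVec hsym, sub_self]
  exact (sub_eq_zero.1 (eq_zero_of_lap_mulVec_eq_zero hsym hnn hconn hr hsum)).symm

end Laplacian

theorem stmt11_general (n : ℕ) (Φ : Matrix (Fin n) (Fin n) ℝ)
    (hsym : Φᵀ = Φ) (hnn : ∀ i j, 0 ≤ Φ i j)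
    (hconn : (graphOf Φ).Connected)
    (j k : Fin n)
    (M : Matrix (Fin n) (Fin n) ℝ) (hM : IsPInv (lap Φ) M) :
    ∀ w : Fin n → ℝ, w = M.mulVec (Pi.single j 1 - Pi.single k 1) →
      (⨆ i, w i) = max (w j) (w k) ∧ (⨅ i, w i) = min (w j) (w k) := by
  rintro w rfl
  have hLw : lap Φ *ᵥ (M *ᵥ (Pi.single j 1 - Pi.single k 1)) = Pi.single j 1 - Pi.single k 1 :=
    lap_mulVec_mulVec_of_isPInv hsym hnn hconn hM (by simp [Finset.sum_sub_distrib])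
  set w := M *ᵥ (Pi.single j 1 - Pi.single k 1)
  have hmax : ∀ i, w i ≤ w j := apply_le_of_lap_mulVec_nonpos hsym hnn hconn fun i hi => by
    rw [hLw]; rcases eq_or_ne i k with rfl | hik <;> simp [*]
  have hmin : ∀ i, w k ≤ w i := le_apply_of_lap_mulVec_nonneg hsym hnn hconn fun i hi => by
    rw [hLw]; rcases eq_or_ne i j with rfl | hij <;> simp [*]
  have : Nonempty (Fin n) := ⟨j⟩
  constructor
  · rw [max_eq_left (hmin j)]
    exact le_antisymm (ciSup_le hmax) (le_ciSup (Finite.bddAbove_range w) j)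
  · rw [min_eq_right (hmin j)]
    exact le_antisymm (ciInf_le (Finite.bddBelow_range w) k) (le_ciInf hmin)

/-- maximum principle: for an edge `(j,k)`, the extrema of
`w = L†(e_j - e_k)` are attained at `j` or `k`. -/
theorem stmt11 (n : ℕ) (hn : 2 ≤ n) (Φ : Matrix (Fin n) (Fin n) ℝ)
    (hsym : Φᵀ = Φ) (hnn : ∀ i j, 0 ≤ Φ i j) (hdiag : ∀ i, Φ i i = 0)
    (hconn : (graphOf Φ).Connected)
    (j k : Fin n) (hjk : 0 < Φ j k)
    (M : Matrix (Fin n) (Fin n) ℝ) (hM : IsPInv (lap Φ) M) :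
    ∀ w : Fin n → ℝ, w = M.mulVec (Pi.single j 1 - Pi.single k 1) →
      (⨆ i, w i) = max (w j) (w k) ∧ (⨅ i, w i) = min (w j) (w k) :=
  stmt11_general n Φ hsym hnn hconn j k M hM
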